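/- If χ is a corrector for (p, c) for some p ∈ ℝ^n, then (∫₀¹ 1/g(s) ds)⁻¹ ≤ c ≤ ∫₀¹ g(s) ds and c ≥ min g > 0; moreover, if g is nonconstant and p ≠ 0, then the strict inequality c < ∫₀¹ g(s) ds holds. -/

import Mathlib

/-!
Integrating the corrector equation over one period, the terms `χ''` and `χ''/χ'` integrate to
zero (`χ'` is periodic), so `c = ∫₀¹ g(χ) ≥ min g` and `c = ∫₀¹ g(χ)/χ'`; a change of variables
gives `∫₀¹ g(χ) χ' = ∫₀¹ g` and `∫₀¹ χ'/g(χ) = ∫₀¹ 1/g`. With `A = ∫₀¹ 1/g`, the inequality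
`x + x⁻¹ ≥ 2` applied to `x = χ'` and to `x = χ'/(A g(χ))` and integrated then yields both bounds,
and the upper bound is strict unless `χ' ≡ 1`, in which case `χ(z) = χ(0) + z` and `g ≡ c`.
-/

open Set Filter intervalIntegral
open scoped Topology

noncomputable section

/-- A corrector for `(p, c)`: a C² function `χ : ℝ → ℝ` with `χ' > 0`, `χ(z+1) = χ(z) + 1`,
satisfying `|p|²·χ''(z) − c·χ'(z) + g(χ(z)) = 0` for all `z ∈ ℝ`. -/
def IsCorrector {n : ℕ} (g : ℝ → ℝ) (p : EuclideanSpace ℝ (Fin n)) (c : ℝ) (χ : ℝ → ℝ) : Prop :=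
  ContDiff ℝ 2 χ ∧ (∀ z, 0 < deriv χ z) ∧ (∀ z, χ (z + 1) = χ z + 1) ∧
  ∀ z, ‖p‖ ^ 2 * deriv (deriv χ) z - c * deriv χ z + g (χ z) = 0

open Function

theorem add_inv_self_sub_two {x : ℝ} (hx : x ≠ 0) : x + x⁻¹ - 2 = (x - 1) ^ 2 / x := by
  field_simp
  ring

theorem two_le_add_inv_self {x : ℝ} (hx : 0 < x) : 2 ≤ x + x⁻¹ := by
  have hsq : 0 ≤ (x - 1) ^ 2 / x := by positivity
  linarith [add_inv_self_sub_two hx.ne']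

theorem two_lt_add_inv_self {x : ℝ} (hx : 0 < x) (h1 : x ≠ 1) : 2 < x + x⁻¹ := by
  have hsq : 0 < (x - 1) ^ 2 / x := div_pos (sq_pos_of_ne_zero (sub_ne_zero.2 h1)) hx
  linarith [add_inv_self_sub_two hx.ne']

section Periodic

variable {φ χ : ℝ → ℝ} {T : ℝ}

theorem Function.Periodic.integral_deriv_eq_zero (hφ : Periodic φ T) (hd : Differentiable ℝ φ)
    (hc : Continuous (deriv φ)) : ∫ z in (0:ℝ)..T, deriv φ z = 0 := by
  rw [integral_deriv_eq_sub (fun x _ => hd x) (hc.intervalIntegrable 0 T),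
    ← zero_add T, hφ 0, sub_self]

theorem Function.Periodic.integral_deriv_div_eq_zero (hφ : Periodic φ T) (hd : Differentiable ℝ φ)
    (hc : Continuous (deriv φ)) (hne : ∀ z, φ z ≠ 0) :
    ∫ z in (0:ℝ)..T, deriv φ z / φ z = 0 := by
  rw [integral_eq_sub_of_hasDerivAt (f := fun z => Real.log (φ z))
    (fun x _ => (hd x).hasDerivAt.log (hne x))
    ((hc.div (hd.continuous) hne).intervalIntegrable 0 T), ← zero_add T, hφ 0, sub_self]

theorem periodic_deriv_of_map_add (hχ : ∀ z, χ (z + T) = χ z + T) : Periodic (deriv χ) T := by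
  intro z
  have h : deriv (fun w => χ (w + T)) z = deriv (fun w => χ w + T) z := by
    simp only [hχ]
  rwa [deriv_comp_add_const, deriv_add_const] at h

theorem integral_deriv_of_map_add (hχ : ∀ z, χ (z + T) = χ z + T) (hd : Differentiable ℝ χ)
    (hc : Continuous (deriv χ)) : ∫ z in (0:ℝ)..T, deriv χ z = T := by
  rw [integral_deriv_eq_sub (fun x _ => hd x) (hc.intervalIntegrable 0 T),
    ← zero_add T, hχ 0, zero_add]
  ring

theorem integral_comp_mul_deriv_of_map_add {f : ℝ → ℝ} (hχ : ∀ z, χ (z + T) = χ z + T)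
    (hd : Differentiable ℝ χ) (hc : Continuous (deriv χ)) (hf : Continuous f)
    (hfT : Periodic f T) : ∫ z in (0:ℝ)..T, f (χ z) * deriv χ z = ∫ s in (0:ℝ)..T, f s := by
  have h := integral_comp_mul_deriv (a := 0) (b := T)
    (fun x _ => (hd x).hasDerivAt) hc.continuousOn hf
  rw [← zero_add T, hχ 0, hfT.intervalIntegral_add_eq (χ 0) 0] at h
  simpa only [zero_add, comp_apply] using h

end Periodic

namespace IsCorrector

variable {n : ℕ} {g : ℝ → ℝ} {p : EuclideanSpace ℝ (Fin n)} {c : ℝ} {χ : ℝ → ℝ}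

theorem deriv_pos (hχ : IsCorrector g p c χ) (z : ℝ) : 0 < deriv χ z := hχ.2.1 z

theorem map_add_one (hχ : IsCorrector g p c χ) (z : ℝ) : χ (z + 1) = χ z + 1 := hχ.2.2.1 z

theorem differentiable (hχ : IsCorrector g p c χ) : Differentiable ℝ χ :=
  hχ.1.differentiable (by norm_num)

theorem continuous_deriv (hχ : IsCorrector g p c χ) : Continuous (deriv χ) :=
  hχ.1.continuous_deriv (by norm_num)

theorem differentiable_deriv (hχ : IsCorrector g p c χ) : Differentiable ℝ (deriv χ) :=
  hχ.1.differentiable_deriv_two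

theorem continuous_deriv_deriv (hχ : IsCorrector g p c χ) : Continuous (deriv (deriv χ)) :=
  (hχ.1.deriv' (n := 1)).continuous_deriv le_rfl

theorem periodic_deriv (hχ : IsCorrector g p c χ) : Periodic (deriv χ) 1 :=
  periodic_deriv_of_map_add hχ.map_add_one

theorem continuous_comp (hχ : IsCorrector g p c χ) (hg : Continuous g) :
    Continuous fun z => g (χ z) :=
  hg.comp hχ.differentiable.continuous

theorem comp_eq (hχ : IsCorrector g p c χ) (z : ℝ) :
    g (χ z) = c * deriv χ z - ‖p‖ ^ 2 * deriv (deriv χ) z := by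
  linarith [hχ.2.2.2 z]

theorem integral_comp (hχ : IsCorrector g p c χ) : ∫ z in (0:ℝ)..1, g (χ z) = c := by
  simp only [hχ.comp_eq]
  rw [integral_sub (f := fun z => c * deriv χ z) (g := fun z => ‖p‖ ^ 2 * deriv (deriv χ) z)
      ((continuous_const.mul hχ.continuous_deriv).intervalIntegrable 0 1)
      ((continuous_const.mul hχ.continuous_deriv_deriv).intervalIntegrable 0 1),
    integral_const_mul, integral_const_mul,
    integral_deriv_of_map_add hχ.map_add_one hχ.differentiable hχ.continuous_deriv,
    hχ.periodic_deriv.integral_deriv_eq_zero hχ.differentiable_deriv hχ.continuous_deriv_deriv]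
  ring

theorem integral_comp_div_deriv (hχ : IsCorrector g p c χ) :
    ∫ z in (0:ℝ)..1, g (χ z) / deriv χ z = c := by
  have hne z : deriv χ z ≠ 0 := (hχ.deriv_pos z).ne'
  have h z : g (χ z) / deriv χ z = c - ‖p‖ ^ 2 * (deriv (deriv χ) z / deriv χ z) := by
    rw [hχ.comp_eq, sub_div, mul_div_cancel_right₀ _ (hne z), mul_div_assoc]
  simp only [h]
  rw [integral_sub (f := fun _ => c)
      (g := fun z => ‖p‖ ^ 2 * (deriv (deriv χ) z / deriv χ z)) intervalIntegrable_const
      ((continuous_const.mul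
        (hχ.continuous_deriv_deriv.div hχ.continuous_deriv hne)).intervalIntegrable 0 1),
    integral_const_mul,
    hχ.periodic_deriv.integral_deriv_div_eq_zero hχ.differentiable_deriv
      hχ.continuous_deriv_deriv hne]
  simp

theorem le_of_forall_le (hχ : IsCorrector g p c χ) (hg : Continuous g) {m : ℝ}
    (hm : ∀ y, m ≤ g y) : m ≤ c := by
  have h := integral_mono_on (μ := MeasureTheory.volume) zero_le_one intervalIntegrable_const
    ((hχ.continuous_comp hg).intervalIntegrable 0 1) (fun z _ => hm (χ z))
  simpa [hχ.integral_comp] using h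

theorem integral_comp_mul_add_inv (hχ : IsCorrector g p c χ) (hg : Continuous g)
    (hper : Periodic g 1) :
    ∫ z in (0:ℝ)..1, g (χ z) * (deriv χ z + (deriv χ z)⁻¹) = (∫ s in (0:ℝ)..1, g s) + c := by
  have hgχ : Continuous fun z => g (χ z) := hχ.continuous_comp hg
  simp only [mul_add, ← div_eq_mul_inv]
  rw [integral_add (f := fun z => g (χ z) * deriv χ z) (g := fun z => g (χ z) / deriv χ z)
      ((hgχ.mul hχ.continuous_deriv).intervalIntegrable 0 1)
      ((hgχ.div hχ.continuous_deriv fun z => (hχ.deriv_pos z).ne').intervalIntegrable 0 1),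
    integral_comp_mul_deriv_of_map_add hχ.map_add_one hχ.differentiable hχ.continuous_deriv hg hper,
    hχ.integral_comp_div_deriv]

theorem eq_of_deriv_eq_one (hχ : IsCorrector g p c χ) (h : ∀ z, deriv χ z = 1) (y : ℝ) :
    g y = c := by
  have hχ'' z : deriv (deriv χ) z = 0 := by
    rw [show deriv χ = fun _ => (1 : ℝ) from funext h, deriv_const]
  have hlin z : χ z = χ 0 + z := by
    have hderiv w : deriv (fun z => χ z - z) w = 0 := by
      rw [deriv_fun_sub (hχ.differentiable w) differentiableAt_fun_id, h w, deriv_id'', sub_self]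
    have := is_const_of_deriv_eq_zero (f := fun z => χ z - z)
      (hχ.differentiable.sub differentiable_fun_id) hderiv z 0
    linarith
  have := hχ.comp_eq (y - χ 0)
  rwa [hlin, add_sub_cancel, h, hχ'', mul_one, mul_zero, sub_zero] at this

theorem lt_integral (hχ : IsCorrector g p c χ) (hg : Continuous g) (hper : Periodic g 1)
    (hpos : ∀ y, 0 < g y) (h : ∃ z, deriv χ z ≠ 1) : c < ∫ s in (0:ℝ)..1, g s := by
  obtain ⟨z, hz⟩ := h
  obtain ⟨z₀, hz₀, hzz₀⟩ := hχ.periodic_deriv.exists_mem_Ico₀ one_pos z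
  have hgχ := hχ.continuous_comp hg
  have hcont : Continuous fun z => g (χ z) * (deriv χ z + (deriv χ z)⁻¹) :=
    hgχ.mul (hχ.continuous_deriv.add (hχ.continuous_deriv.inv₀ fun z => (hχ.deriv_pos z).ne'))
  have hle z : 2 * g (χ z) ≤ g (χ z) * (deriv χ z + (deriv χ z)⁻¹) := by
    rw [mul_comm]
    exact mul_le_mul_of_nonneg_left (two_le_add_inv_self (hχ.deriv_pos z)) (hpos _).le
  have hlt : 2 * g (χ z₀) < g (χ z₀) * (deriv χ z₀ + (deriv χ z₀)⁻¹) := by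
    rw [mul_comm]
    exact mul_lt_mul_of_pos_left (two_lt_add_inv_self (hχ.deriv_pos z₀) (hzz₀ ▸ hz)) (hpos _)
  have h := integral_lt_integral_of_continuousOn_of_le_of_exists_lt one_pos
    (hgχ.const_mul 2).continuousOn hcont.continuousOn (fun z _ => hle z)
    ⟨z₀, Ico_subset_Icc_self hz₀, hlt⟩
  rw [integral_const_mul, hχ.integral_comp, hχ.integral_comp_mul_add_inv hg hper] at h
  linarith

theorem le_integral (hχ : IsCorrector g p c χ) (hg : Continuous g) (hper : Periodic g 1)
    (hpos : ∀ y, 0 < g y) : c ≤ ∫ s in (0:ℝ)..1, g s := by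
  by_cases h : ∃ z, deriv χ z ≠ 1
  · exact (hχ.lt_integral hg hper hpos h).le
  · push Not at h
    simp [hχ.eq_of_deriv_eq_one h]

theorem inv_integral_inv_le (hχ : IsCorrector g p c χ) (hg : Continuous g) (hper : Periodic g 1)
    (hpos : ∀ y, 0 < g y) : (∫ s in (0:ℝ)..1, (g s)⁻¹)⁻¹ ≤ c := by
  have hne z : g z ≠ 0 := (hpos z).ne'
  set A := ∫ s in (0:ℝ)..1, (g s)⁻¹
  have hA : 0 < A := intervalIntegral_pos_of_pos_on ((hg.inv₀ hne).intervalIntegrable 0 1)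
    (fun s _ => inv_pos.2 (hpos s)) one_pos
  have hx z : 0 < A⁻¹ * ((g (χ z))⁻¹ * deriv χ z) := by
    have := hpos (χ z)
    have := hχ.deriv_pos z
    positivity
  have hx_inv z : (A⁻¹ * ((g (χ z))⁻¹ * deriv χ z))⁻¹ = A * (g (χ z) / deriv χ z) := by
    rw [mul_inv, mul_inv, inv_inv, inv_inv, div_eq_mul_inv]
  have hcont₁ : Continuous fun z => A⁻¹ * ((g (χ z))⁻¹ * deriv χ z) :=
    continuous_const.mul (((hg.inv₀ hne).comp hχ.differentiable.continuous).mul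
      hχ.continuous_deriv)
  have hcont₂ : Continuous fun z => A * (g (χ z) / deriv χ z) :=
    continuous_const.mul ((hχ.continuous_comp hg).div hχ.continuous_deriv
      fun z => (hχ.deriv_pos z).ne')
  have h : ∫ _ in (0:ℝ)..1, (2:ℝ) ≤
      ∫ z in (0:ℝ)..1, A⁻¹ * ((g (χ z))⁻¹ * deriv χ z) + A * (g (χ z) / deriv χ z) :=
    integral_mono_on zero_le_one intervalIntegrable_const
      ((hcont₁.add hcont₂).intervalIntegrable 0 1) fun z _ => hx_inv z ▸ two_le_add_inv_self (hx z)
  rw [integral_add (hcont₁.intervalIntegrable 0 1) (hcont₂.intervalIntegrable 0 1),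
    integral_const_mul, integral_const_mul, hχ.integral_comp_div_deriv,
    integral_comp_mul_deriv_of_map_add (f := fun s => (g s)⁻¹) hχ.map_add_one hχ.differentiable
      hχ.continuous_deriv (hg.inv₀ hne) (fun y => congrArg Inv.inv (hper y)),
    inv_mul_cancel₀ hA.ne'] at h
  rw [integral_const, sub_zero, one_smul] at h
  rw [inv_le_iff_one_le_mul₀ hA]
  linarith

end IsCorrector

theorem statement_4_general {n : ℕ} (g : ℝ → ℝ) (hg : ∃ K, LipschitzWith K g)
    (hper : ∀ y, g (y + 1) = g y) (hpos : ∀ y, 0 < g y)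
    (m : ℝ) (hm : IsLeast (Set.range g) m)
    (p : EuclideanSpace ℝ (Fin n)) (c : ℝ) (χ : ℝ → ℝ)
    (hχ : IsCorrector g p c χ) :
    (∫ s in (0:ℝ)..1, (g s)⁻¹)⁻¹ ≤ c ∧ c ≤ (∫ s in (0:ℝ)..1, g s) ∧
    m ≤ c ∧ 0 < m ∧
    ((∃ y₁ y₂, g y₁ ≠ g y₂) → p ≠ 0 → c < ∫ s in (0:ℝ)..1, g s) := by
  obtain ⟨K, hK⟩ := hg
  have hgc : Continuous g := hK.continuous
  obtain ⟨⟨y₀, rfl⟩, hm⟩ := hm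
  refine ⟨hχ.inv_integral_inv_le hgc hper hpos, hχ.le_integral hgc hper hpos,
    hχ.le_of_forall_le hgc fun y => hm ⟨y, rfl⟩, hpos y₀, ?_⟩
  rintro ⟨y₁, y₂, hne⟩ -
  refine hχ.lt_integral hgc hper hpos ?_
  by_contra! h
  exact hne ((hχ.eq_of_deriv_eq_one h y₁).trans (hχ.eq_of_deriv_eq_one h y₂).symm)

theorem statement_4 {n : ℕ} (g : ℝ → ℝ) (hg : ∃ K, LipschitzWith K g)
    (hper : ∀ y, g (y + 1) = g y) (hpos : ∀ y, 0 < g y)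
    (m M : ℝ) (hm : IsLeast (Set.range g) m) (hM : IsGreatest (Set.range g) M)
    (p : EuclideanSpace ℝ (Fin n)) (c : ℝ) (χ : ℝ → ℝ)
    (hχ : IsCorrector g p c χ) :
    (∫ s in (0:ℝ)..1, (g s)⁻¹)⁻¹ ≤ c ∧ c ≤ (∫ s in (0:ℝ)..1, g s) ∧
    m ≤ c ∧ 0 < m ∧
    ((∃ y₁ y₂, g y₁ ≠ g y₂) → p ≠ 0 → c < ∫ s in (0:ℝ)..1, g s) :=
  statement_4_general g hg hper hpos m hm p c χ hχ
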